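/- arXiv:1210.6709 — 5 statements merged into one kernel-verified Lean document; each statement's English description precedes it below -/
import Mathlib

section
/- For any k, n ≥ 1 there exist N ≥ 1 and epimorphisms of finite reflexive linear graphs from [N] onto [k] and from [N] onto [n]. (Joint projection property of the family of finite reflexive linear graphs.) -/
/-- `φ` is an epimorphism of finite reflexive linear graphs from `[l] = {1,…,l}`
onto `[k] = {1,…,k}`. -/
def IsLinEpi (l k : ℕ) (φ : ℕ → ℕ) : Prop :=
  (∀ x ∈ Finset.Icc 1 l, φ x ∈ Finset.Icc 1 k) ∧
  (∀ a ∈ Finset.Icc 1 k, ∃ x ∈ Finset.Icc 1 l, φ x = a) ∧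
  (∀ x ∈ Finset.Icc 1 l, ∀ y ∈ Finset.Icc 1 l,
    Nat.dist x y ≤ 1 → Nat.dist (φ x) (φ y) ≤ 1) ∧
  (∀ a ∈ Finset.Icc 1 k, ∀ b ∈ Finset.Icc 1 k, Nat.dist a b ≤ 1 →
    ∃ x ∈ Finset.Icc 1 l, ∃ y ∈ Finset.Icc 1 l,
      Nat.dist x y ≤ 1 ∧ φ x = a ∧ φ y = b)

lemma isLinEpi_min (N k : ℕ) (hk : 1 ≤ k) (hkN : k ≤ N) :
    IsLinEpi N k (fun x => min x k) := by
  refine ⟨?_, ?_, ?_, ?_⟩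
  · intro x hx
    simp only [Finset.mem_Icc] at *
    omega
  · intro a ha
    simp only [Finset.mem_Icc] at ha
    exact ⟨a, by simp only [Finset.mem_Icc]; omega, min_eq_left ha.2⟩
  · intro x hx y hy h
    simp only [Finset.mem_Icc, Nat.dist] at *
    omega
  · intro a ha b hb h
    simp only [Finset.mem_Icc] at ha hb
    refine ⟨a, by simp only [Finset.mem_Icc]; omega, b,
      by simp only [Finset.mem_Icc]; omega, h, min_eq_left ha.2, min_eq_left hb.2⟩

/-- Joint projection property of the family of finite reflexive linear graphs. -/
theorem linear_graphs_jpp (k n : ℕ) (hk : 1 ≤ k) (hn : 1 ≤ n) :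
    ∃ N : ℕ, 1 ≤ N ∧ ∃ φ ψ : ℕ → ℕ, IsLinEpi N k φ ∧ IsLinEpi N n ψ := by
  exact ⟨max k n, le_trans hk (le_max_left _ _), _, _,
    isLinEpi_min _ _ hk (le_max_left _ _), isLinEpi_min _ _ hn (le_max_right _ _)⟩
end

section
/- Let k, n ≥ 1. Define φ1: [kn] → [k] by φ1((i−1)n + j) = i for i ∈ [k], j ∈ [n], and φ2: [kn] → [n] by φ2((i−1)k + j) = i for i ∈ [n], j ∈ [k]. Then φ1 is an epimorphism from ([kn], antidiagonal of [kn]) onto ([k], antidiagonal of [k]) and φ2 is an epimorphism from ([kn], antidiagonal of [kn]) onto ([n], antidiagonal of [n]). -/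
/-- `s` is a binary relation on `[k] = {1,…,k}`. -/
def RelOn (k : ℕ) (s : ℕ → ℕ → Prop) : Prop :=
  ∀ a b, s a b → a ∈ Finset.Icc 1 k ∧ b ∈ Finset.Icc 1 k

/-- The relation `s` on `[k]` is surjective: every point has a successor and a
predecessor. -/
def SurjRel (k : ℕ) (s : ℕ → ℕ → Prop) : Prop :=
  ∀ a ∈ Finset.Icc 1 k, (∃ b, s a b) ∧ (∃ c, s c a)

/-- The relation `s` is connected: any two vertices of the graph whose vertices
are pairs `(a,b)` with `s a b`, with edges between pairs that are coordinatewise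
at distance `≤ 1`, are joined by a path. -/
def ConnRel (s : ℕ → ℕ → Prop) : Prop :=
  ∀ p q : ℕ × ℕ, s p.1 p.2 → s q.1 q.2 →
    Relation.ReflTransGen
      (fun u v => s u.1 u.2 ∧ s v.1 v.2 ∧ Nat.dist u.1 v.1 ≤ 1 ∧ Nat.dist u.2 v.2 ≤ 1) p q

/-- `φ : ([l], t) → ([k], s)` is an epimorphism of finite reflexive linear graphs
equipped with binary relations. -/
def IsRelEpi (l k : ℕ) (t s : ℕ → ℕ → Prop) (φ : ℕ → ℕ) : Prop :=
  IsLinEpi l k φ ∧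
  ∀ a ∈ Finset.Icc 1 k, ∀ b ∈ Finset.Icc 1 k,
    (s a b ↔ ∃ x ∈ Finset.Icc 1 l, ∃ y ∈ Finset.Icc 1 l, φ x = a ∧ φ y = b ∧ t x y)

/-- The antidiagonal relation on `[n] = {1,…,n}`: `s a b` iff `b = n + 1 - a`. -/
def antidiag (n : ℕ) (a b : ℕ) : Prop :=
  a ∈ Finset.Icc 1 n ∧ b = n + 1 - a

section Aux

lemma auxDiv (n q x : ℕ) (hn : 1 ≤ n) (hq : q * n + 1 ≤ x) (hx : x ≤ q * n + n) :
    (x - 1) / n = q := by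
  apply Nat.div_eq_of_lt_le
  · omega
  · have e : (q + 1) * n = q * n + n := by ring
    omega

lemma auxMain (k n : ℕ) (hk : 1 ≤ k) (hn : 1 ≤ n) (φ : ℕ → ℕ)
    (h : ∀ i ∈ Finset.Icc 1 k, ∀ j ∈ Finset.Icc 1 n, φ ((i - 1) * n + j) = i) :
    IsRelEpi (k * n) k (antidiag (k * n)) (antidiag k) φ := by
  have h0 : 0 < n := hn
  -- value of φ on the q-th block
  have hval : ∀ q x, q + 1 ≤ k → q * n + 1 ≤ x → x ≤ q * n + n → φ x = q + 1 := by
    intro q x hqk hx1 hx2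
    have e := h (q + 1) (by simp [Finset.mem_Icc]; omega) (x - q * n)
      (by simp [Finset.mem_Icc]; omega)
    have e2 : (q + 1 - 1) * n + (x - q * n) = x := by
      have : q + 1 - 1 = q := rfl
      rw [this]; omega
    rwa [e2] at e
  -- every point of [1, kn] lies in a unique block
  have hquot : ∀ x, 1 ≤ x → x ≤ k * n →
      ∃ q, q + 1 ≤ k ∧ q * n + 1 ≤ x ∧ x ≤ q * n + n ∧ φ x = q + 1 := by
    intro x hx1 hx2
    have hdm := Nat.div_add_mod (x - 1) n
    have hm := Nat.mod_lt (x - 1) h0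
    have hc : n * ((x - 1) / n) = ((x - 1) / n) * n := Nat.mul_comm _ _
    have hs1 : ((x - 1) / n) * n + 1 ≤ x := by omega
    have hs2 : x ≤ ((x - 1) / n) * n + n := by omega
    have hqk : (x - 1) / n + 1 ≤ k := by
      by_contra hcon
      push_neg at hcon
      have : k * n ≤ ((x - 1) / n) * n := mul_le_mul_left (by omega) n
      omega
    exact ⟨(x - 1) / n, hqk, hs1, hs2, hval _ x hqk hs1 hs2⟩
  -- membership helper
  have hmem : ∀ q x, q + 1 ≤ k → q * n + 1 ≤ x → x ≤ q * n + n →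
      x ∈ Finset.Icc 1 (k * n) := by
    intro q x hqk hx1 hx2
    have e1 : (q + 1) * n = q * n + n := by ring
    have e2 : (q + 1) * n ≤ k * n := mul_le_mul_left hqk n
    simp [Finset.mem_Icc]; omega
  -- step comparison
  have key : ∀ p q x y, q * n + 1 ≤ x → x ≤ q * n + n → p * n + 1 ≤ y →
      y ≤ p * n + n → y = x + 1 → p ≤ q + 1 ∧ q ≤ p := by
    intro p q x y hx1 hx2 hy1 hy2 hxy
    constructor
    · by_contra hc
      push_neg at hc
      have h1 : (q + 2) * n ≤ p * n := mul_le_mul_left (by omega) n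
      have h2 : (q + 2) * n = q * n + n + n := by ring
      omega
    · by_contra hc
      push_neg at hc
      have h1 : (p + 1) * n ≤ q * n := mul_le_mul_left (by omega) n
      have h2 : (p + 1) * n = p * n + n := by ring
      omega
  refine ⟨⟨?_, ?_, ?_, ?_⟩, ?_⟩
  · -- maps into [1,k]
    intro x hx
    simp [Finset.mem_Icc] at hx ⊢
    obtain ⟨q, hq, _, _, hφ⟩ := hquot x hx.1 hx.2
    omega
  · -- surjective
    intro a ha
    simp [Finset.mem_Icc] at ha
    refine ⟨(a - 1) * n + 1, hmem (a - 1) _ (by omega) (by omega) (by omega), ?_⟩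
    have := hval (a - 1) ((a - 1) * n + 1) (by omega) (by omega) (by omega)
    omega
  · -- graph homomorphism
    intro x hx y hy hd
    simp [Finset.mem_Icc] at hx hy
    obtain ⟨q, hq1, hq2, hq3, hq4⟩ := hquot x hx.1 hx.2
    obtain ⟨p, hp1, hp2, hp3, hp4⟩ := hquot y hy.1 hy.2
    have hcases : x = y ∨ y = x + 1 ∨ x = y + 1 := by simp [Nat.dist] at hd; omega
    rcases hcases with rfl | hc | hc
    · simp [Nat.dist]
    · have := key p q x y hq2 hq3 hp2 hp3 hc
      simp [Nat.dist, hq4, hp4]; omega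
    · have := key q p y x hp2 hp3 hq2 hq3 hc
      simp [Nat.dist, hq4, hp4]; omega
  · -- edge surjectivity
    intro a ha b hb hd
    simp [Finset.mem_Icc] at ha hb
    have hcases : a = b ∨ b = a + 1 ∨ a = b + 1 := by simp [Nat.dist] at hd; omega
    rcases hcases with rfl | hc | hc
    · refine ⟨(a - 1) * n + 1, hmem (a - 1) _ (by omega) (by omega) (by omega),
        (a - 1) * n + 1, hmem (a - 1) _ (by omega) (by omega) (by omega), ?_, ?_, ?_⟩
      · simp [Nat.dist]
      all_goals
        have := hval (a - 1) ((a - 1) * n + 1) (by omega) (by omega) (by omega)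
        omega
    · have e : a * n = (a - 1) * n + n := by
        conv_lhs => rw [← Nat.sub_add_cancel ha.1]
        ring
      refine ⟨(a - 1) * n + n, hmem (a - 1) _ (by omega) (by omega) (by omega),
        (a - 1) * n + n + 1, hmem a _ (by omega) (by omega) (by omega), ?_, ?_, ?_⟩
      · simp [Nat.dist]
      · have := hval (a - 1) ((a - 1) * n + n) (by omega) (by omega) (by omega)
        omega
      · have := hval a ((a - 1) * n + n + 1) (by omega) (by omega) (by omega)
        omega
    · have e : b * n = (b - 1) * n + n := by
        conv_lhs => rw [← Nat.sub_add_cancel hb.1]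
        ring
      refine ⟨(b - 1) * n + n + 1, hmem b _ (by omega) (by omega) (by omega),
        (b - 1) * n + n, hmem (b - 1) _ (by omega) (by omega) (by omega), ?_, ?_, ?_⟩
      · simp [Nat.dist]
      · have := hval b ((b - 1) * n + n + 1) (by omega) (by omega) (by omega)
        omega
      · have := hval (b - 1) ((b - 1) * n + n) (by omega) (by omega) (by omega)
        omega
  · -- the antidiagonal relation is reflected and lifted
    intro a ha b hb
    simp [Finset.mem_Icc] at ha hb
    constructor
    · rintro ⟨-, hab⟩
      have e1 : ((a - 1) + (b - 1) + 1) * n = k * n := by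
        congr 1; omega
      have e2 : ((a - 1) + (b - 1) + 1) * n = (a - 1) * n + (b - 1) * n + n := by ring
      refine ⟨(a - 1) * n + 1, hmem (a - 1) _ (by omega) (by omega) (by omega),
        (b - 1) * n + n, hmem (b - 1) _ (by omega) (by omega) (by omega), ?_, ?_, ?_, ?_⟩
      · have := hval (a - 1) ((a - 1) * n + 1) (by omega) (by omega) (by omega)
        omega
      · have := hval (b - 1) ((b - 1) * n + n) (by omega) (by omega) (by omega)
        omega
      · exact hmem (a - 1) _ (by omega) (by omega) (by omega)
      · omega
    · rintro ⟨x, hx, y, hy, hfx, hfy, -, hyx⟩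
      simp [Finset.mem_Icc] at hx hy
      obtain ⟨q, hq1, hq2, hq3, hq4⟩ := hquot x hx.1 hx.2
      obtain ⟨p, hp1, hp2, hp3, hp4⟩ := hquot y hy.1 hy.2
      refine ⟨by simp [Finset.mem_Icc]; omega, ?_⟩
      have hA : (q + p) * n = q * n + p * n := by ring
      have hB : (q + p + 2) * n = q * n + p * n + n + n := by ring
      rcases le_or_gt k (q + p) with hle | hlt
      · have := mul_le_mul_left hle n
        omega
      rcases le_or_gt (q + p + 2) k with hle' | hlt'
      · have := mul_le_mul_left hle' n
        omega
      omega

end Aux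

/-- The maps `φ1((i-1)n + j) = i` and `φ2((i-1)k + j) = i` are epimorphisms from
`([kn], antidiagonal)` onto `([k], antidiagonal)` and `([n], antidiagonal)`
respectively. -/
theorem antidiagonal_jpp_maps (k n : ℕ) (hk : 1 ≤ k) (hn : 1 ≤ n)
    (φ1 φ2 : ℕ → ℕ)
    (h1 : ∀ i ∈ Finset.Icc 1 k, ∀ j ∈ Finset.Icc 1 n, φ1 ((i - 1) * n + j) = i)
    (h2 : ∀ i ∈ Finset.Icc 1 n, ∀ j ∈ Finset.Icc 1 k, φ2 ((i - 1) * k + j) = i) :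
    IsRelEpi (k * n) k (antidiag (k * n)) (antidiag k) φ1 ∧
    IsRelEpi (k * n) n (antidiag (k * n)) (antidiag n) φ2 := by
  refine ⟨auxMain k n hk hn φ1 h1, ?_⟩
  have := auxMain n k hn hk φ2 h2
  rwa [Nat.mul_comm n k] at this
end

section
/- Let k, l ≥ 1, let A = A_k and B = A_l be signed intervals with their antidiagonal relations s^A and s^B, and let φ: B → A be an epimorphism of reflexive linear graphs. Then φ is an epimorphism from (B, s^B) onto (A, s^A) if and only if φ(i) = −φ(−i) for every i ∈ B. In particular, if φ is an epimorphism from (B, s^B) onto (A, s^A), then either φ(1) = 1 and φ(−1) = −1, or φ(1) = −1 and φ(−1) = 1. -/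
/-- The signed interval `A_k = {i ∈ ℤ : 1 ≤ |i| ≤ k}`. -/
def SI (k : ℕ) : Set ℤ := {i : ℤ | i ≠ 0 ∧ |i| ≤ (k : ℤ)}

/-- `x` and `y` are equal or consecutive in the order of a signed interval
(`-1` and `1` are consecutive). -/
def adjSI (x y : ℤ) : Prop :=
  |x - y| ≤ 1 ∨ (x = -1 ∧ y = 1) ∨ (x = 1 ∧ y = -1)

/-- `φ` is an epimorphism of reflexive linear graphs from the signed interval
`A_l` onto the signed interval `A_k`. -/
def IsSIEpi (l k : ℕ) (φ : ℤ → ℤ) : Prop :=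
  (∀ x ∈ SI l, φ x ∈ SI k) ∧
  (∀ a ∈ SI k, ∃ x ∈ SI l, φ x = a) ∧
  (∀ x ∈ SI l, ∀ y ∈ SI l, adjSI x y → adjSI (φ x) (φ y)) ∧
  (∀ a ∈ SI k, ∀ b ∈ SI k, adjSI a b →
    ∃ x ∈ SI l, ∃ y ∈ SI l, adjSI x y ∧ φ x = a ∧ φ y = b)

/-- The antidiagonal relation on the signed interval `A_k`: `s i j` iff `j = -i`. -/
def antiSI (k : ℕ) (i j : ℤ) : Prop := i ∈ SI k ∧ j = -i

/-- `φ : (A_l, t) → (A_k, s)` is an epimorphism of signed intervals equipped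
with binary relations. -/
def IsSIRelEpi (l k : ℕ) (t s : ℤ → ℤ → Prop) (φ : ℤ → ℤ) : Prop :=
  IsSIEpi l k φ ∧
  ∀ a ∈ SI k, ∀ b ∈ SI k,
    (s a b ↔ ∃ x ∈ SI l, ∃ y ∈ SI l, φ x = a ∧ φ y = b ∧ t x y)

/-- An epimorphism of reflexive linear graphs between signed intervals is an
epimorphism of the antidiagonal structures iff it is odd; in particular it then
either fixes or swaps `1` and `-1`. -/
theorem antidiagonal_epi_iff_odd (k l : ℕ) (hk : 1 ≤ k) (hl : 1 ≤ l)
    (φ : ℤ → ℤ) (hφ : IsSIEpi l k φ) :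
    (IsSIRelEpi l k (antiSI l) (antiSI k) φ ↔ ∀ i ∈ SI l, φ i = -φ (-i)) ∧
    (IsSIRelEpi l k (antiSI l) (antiSI k) φ →
      (φ 1 = 1 ∧ φ (-1) = -1) ∨ (φ 1 = -1 ∧ φ (-1) = 1)) := by
  obtain ⟨hmaps, hsurj, hadj, hlift⟩ := hφ
  have h1l : (1 : ℤ) ∈ SI l := ⟨one_ne_zero, by simpa using (by exact_mod_cast hl : (1:ℤ) ≤ l)⟩
  have hneg : ∀ x ∈ SI l, -x ∈ SI l := fun x hx =>
    ⟨neg_ne_zero.mpr hx.1, by rw [abs_neg]; exact hx.2⟩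
  have key : IsSIRelEpi l k (antiSI l) (antiSI k) φ ↔ ∀ i ∈ SI l, φ i = -φ (-i) := by
    constructor
    · rintro ⟨_, hrel⟩ i hi
      have h := (hrel (φ i) (hmaps i hi) (φ (-i)) (hmaps _ (hneg i hi))).mpr
        ⟨i, hi, -i, hneg i hi, rfl, rfl, hi, rfl⟩
      have h2 := h.2
      linarith
    · intro hodd
      refine ⟨⟨hmaps, hsurj, hadj, hlift⟩, ?_⟩
      intro a ha b hb
      constructor
      · rintro ⟨_, rfl⟩
        obtain ⟨x, hx, hfx⟩ := hsurj a ha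
        exact ⟨x, hx, -x, hneg x hx, hfx,
          by rw [← hfx]; have := hodd x hx; linarith, hx, rfl⟩
      · rintro ⟨x, hx, y, hy, rfl, rfl, hx', rfl⟩
        exact ⟨ha, by have := hodd x hx; linarith⟩
  refine ⟨key, ?_⟩
  intro hre
  have hodd := key.mp hre
  have hm1l : (-1 : ℤ) ∈ SI l := hneg 1 h1l
  have hadj1 : adjSI (φ 1) (φ (-1)) := hadj 1 h1l (-1) hm1l (Or.inr (Or.inr ⟨rfl, rfl⟩))
  have heq : φ (-1) = -φ 1 := by have := hodd 1 h1l; linarith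
  have hne : φ 1 ≠ 0 := (hmaps 1 h1l).1
  rcases hadj1 with h | ⟨h1, h2⟩ | ⟨h1, h2⟩
  · rw [heq, abs_le] at h
    omega
  · exact Or.inr ⟨h1, h2⟩
  · exact Or.inl ⟨h1, h2⟩
end

section
/- Let r, s, t ≥ 1 and let α: [s] → [r] and β: [t] → [r] satisfy |α(i+1)−α(i)| ≤ 1 for all i and |β(j+1)−β(j)| ≤ 1 for all j (relation-preserving maps, not necessarily surjective). Color a cell (i,j) of the chessboard [s]×[t] black iff α(i) = β(j). If α(1) = 1, β(1) = β(t) = 1, and the range of β is contained in the range of α, then there is a black 8-path from (1,1) to (1,t). -/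
/-- The chessboard `[s] × [t]`. -/
def board (s t : ℕ) : Set (ℕ × ℕ) :=
  {c | 1 ≤ c.1 ∧ c.1 ≤ s ∧ 1 ≤ c.2 ∧ c.2 ≤ t}

/-- 8-adjacency of cells. -/
def adj8 (c d : ℕ × ℕ) : Prop :=
  c ≠ d ∧ Nat.dist c.1 d.1 ≤ 1 ∧ Nat.dist c.2 d.2 ≤ 1

/-- There is a path of cells, each satisfying `good`, from the set `A` to the
set `B`, with consecutive cells related by `adj`. -/
def PathBetween (adj : ℕ × ℕ → ℕ × ℕ → Prop) (good : ℕ × ℕ → Prop)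
    (A B : Set (ℕ × ℕ)) : Prop :=
  ∃ (L : ℕ) (σ : ℕ → ℕ × ℕ), σ 0 ∈ A ∧ σ L ∈ B ∧
    (∀ i ≤ L, good (σ i)) ∧ ∀ i < L, adj (σ i) (σ (i + 1))

/-!
Subdividing both maps (`subdivide`) turns them into walks that move by exactly one at each step,
the original cells becoming those with two odd coordinates. For such walks two 8-adjacent black
cells are diagonal neighbours, and a black cell `(i, j)` of value `v` has
`u i * u' j + d i * d' j` black neighbours, where `u i` and `d i` count the neighbours of `i`
on which `α` takes the values `v + 1` and `v - 1` (and `u'`, `d'` likewise for `β`). Once `α` is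
cut at a maximum dominating `β`, this number is odd only at `(1, 1)` and `(1, t)`, so the handshake
lemma puts both corners in one component. A path between them alternates the parity of both
coordinates, and every second cell of it projects to a black cell of the original board.
-/

open Finset

theorem SimpleGraph.reachable_of_odd_degree {V : Type*} [Fintype V] (G : SimpleGraph V)
    [DecidableRel G.Adj] {u w : V} (hu : Odd (G.degree u))
    (heven : ∀ x, x ≠ u → x ≠ w → Even (G.degree x)) : G.Reachable u w := by
  classical
  let C := G.connectedComponentMk u
  have huC : u ∈ C.supp := rfl
  have hdeg (x : C.supp) : (G.induce C.supp).degree x = G.degree x :=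
    degree_induce_of_neighborSet_subset fun _ h => C.mem_supp_of_adj_mem_supp x.2 h
  obtain ⟨⟨x, hxC⟩, hxu, hx⟩ :=
    (G.induce C.supp).exists_ne_odd_degree_of_exists_odd_degree ⟨u, huC⟩ (by rwa [hdeg])
  rw [hdeg] at hx
  obtain rfl : x = w := by
    by_contra hxw
    exact Nat.not_even_iff_odd.2 hx (heven x (fun h => hxu (Subtype.ext h)) hxw)
  exact C.reachable_of_mem_supp huC hxC

def pathNbrs (n i : ℕ) : Finset ℕ := {k ∈ Icc 1 n | Nat.dist k i = 1}

def upNbrs (f : ℕ → ℕ) (n i : ℕ) : Finset ℕ :=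
  {k ∈ Icc 1 n | Nat.dist k i ≤ 1 ∧ f k = f i + 1}

def downNbrs (f : ℕ → ℕ) (n i : ℕ) : Finset ℕ :=
  {k ∈ Icc 1 n | Nat.dist k i ≤ 1 ∧ f k + 1 = f i}

theorem card_pathNbrs_of_lt_of_lt {n i : ℕ} (h1 : 1 < i) (hn : i < n) :
    #(pathNbrs n i) = 2 := by
  rw [show pathNbrs n i = {i - 1, i + 1} by
    ext k
    simp only [pathNbrs, mem_filter, mem_Icc, mem_insert, mem_singleton]
    simp only [Nat.dist]
    omega]
  exact card_pair (by omega)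

theorem card_pathNbrs_of_eq_one_or_eq {n i : ℕ} (hn : 2 ≤ n) (hi : i = 1 ∨ i = n) :
    #(pathNbrs n i) = 1 := by
  rw [pathNbrs, card_eq_one]
  refine ⟨if i = 1 then 2 else i - 1, ?_⟩
  ext k
  simp only [mem_filter, mem_Icc, mem_singleton]
  simp only [Nat.dist]
  split_ifs <;> omega

theorem downNbrs_eq_empty_of_forall_le {f : ℕ → ℕ} {n i : ℕ} (h : ∀ k ∈ Icc 1 n, f i ≤ f k) :
    downNbrs f n i = ∅ :=
  filter_eq_empty_iff.2 fun k hk hk' => by have := h k hk; omega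

theorem upNbrs_eq_empty_of_forall_ge {f : ℕ → ℕ} {n i : ℕ} (h : ∀ k ∈ Icc 1 n, f k ≤ f i) :
    upNbrs f n i = ∅ :=
  filter_eq_empty_iff.2 fun k hk hk' => by have := h k hk; omega

theorem dist_eq_one_of_mem_upNbrs {f : ℕ → ℕ} {n i k : ℕ} (hk : k ∈ upNbrs f n i) :
    Nat.dist k i = 1 := by
  simp only [upNbrs, mem_filter] at hk
  have hne : k ≠ i := by rintro rfl; omega
  simp only [Nat.dist] at hk ⊢
  omega

theorem dist_eq_one_of_mem_downNbrs {f : ℕ → ℕ} {n i k : ℕ} (hk : k ∈ downNbrs f n i) :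
    Nat.dist k i = 1 := by
  simp only [downNbrs, mem_filter] at hk
  have hne : k ≠ i := by rintro rfl; omega
  simp only [Nat.dist] at hk ⊢
  omega

section UnitSteps

variable {f : ℕ → ℕ} {n : ℕ} (hf : ∀ i, 1 ≤ i → i + 1 ≤ n → Nat.dist (f (i + 1)) (f i) = 1)
include hf

theorem eq_or_succ_or_succ_eq_of_dist_le_one {k i : ℕ} (hk : k ∈ Icc 1 n) (hi : i ∈ Icc 1 n)
    (hki : Nat.dist k i ≤ 1) : k = i ∨ f k = f i + 1 ∨ f k + 1 = f i := by
  simp only [mem_Icc, Nat.dist] at hk hi hki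
  rcases (show k = i ∨ k = i + 1 ∨ i = k + 1 by omega) with rfl | rfl | rfl
  · exact Or.inl rfl
  · have := hf i hi.1 hk.2
    simp only [Nat.dist] at this
    omega
  · have := hf k hk.1 hi.2
    simp only [Nat.dist] at this
    omega

theorem card_upNbrs_add_card_downNbrs {i : ℕ} (hi : i ∈ Icc 1 n) :
    #(upNbrs f n i) + #(downNbrs f n i) = #(pathNbrs n i) := by
  rw [upNbrs, downNbrs, pathNbrs, ← card_union_of_disjoint]
  · congr 1
    ext k
    simp only [mem_union, mem_filter]
    constructor
    · rintro (⟨hk, hki, hfk⟩ | ⟨hk, hki, hfk⟩) <;>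
      · have hne : k ≠ i := by rintro rfl; omega
        exact ⟨hk, by simp only [Nat.dist] at hki ⊢; omega⟩
    · rintro ⟨hk, hki⟩
      rcases eq_or_succ_or_succ_eq_of_dist_le_one hf hk hi hki.le with rfl | h | h
      · simp at hki
      · exact Or.inl ⟨hk, hki.le, h⟩
      · exact Or.inr ⟨hk, hki.le, h⟩
  · rw [disjoint_filter]
    rintro k - ⟨-, h1⟩ ⟨-, h2⟩
    omega

theorem card_upNbrs_of_forall_le {i : ℕ} (hi : i ∈ Icc 1 n) (h : ∀ k ∈ Icc 1 n, f i ≤ f k) :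
    #(upNbrs f n i) = #(pathNbrs n i) := by
  rw [← card_upNbrs_add_card_downNbrs hf hi, downNbrs_eq_empty_of_forall_le h, card_empty, add_zero]

theorem card_downNbrs_of_forall_ge {i : ℕ} (hi : i ∈ Icc 1 n) (h : ∀ k ∈ Icc 1 n, f k ≤ f i) :
    #(downNbrs f n i) = #(pathNbrs n i) := by
  rw [← card_upNbrs_add_card_downNbrs hf hi, upNbrs_eq_empty_of_forall_ge h, card_empty, zero_add]

end UnitSteps

theorem adj8_symm {c d : ℕ × ℕ} (h : adj8 c d) : adj8 d c :=
  ⟨h.1.symm, Nat.dist_comm c.1 d.1 ▸ h.2.1, Nat.dist_comm c.2 d.2 ▸ h.2.2⟩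

instance : DecidableRel adj8 := fun _ _ => inferInstanceAs (Decidable (_ ∧ _ ∧ _))

def blackCells (s t : ℕ) (α β : ℕ → ℕ) : Finset (ℕ × ℕ) :=
  {c ∈ Icc 1 s ×ˢ Icc 1 t | α c.1 = β c.2}

def blackGraph (s t : ℕ) (α β : ℕ → ℕ) : SimpleGraph (blackCells s t α β) where
  Adj c d := adj8 c d
  symm := ⟨fun _ _ => adj8_symm⟩
  loopless := ⟨fun _ h => h.1 rfl⟩

instance {s t : ℕ} {α β : ℕ → ℕ} : DecidableRel (blackGraph s t α β).Adj :=
  fun c d => inferInstanceAs (Decidable (adj8 c.1 d.1))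

theorem blackGraph_degree_eq_card_filter {s t : ℕ} {α β : ℕ → ℕ} (c : blackCells s t α β) :
    (blackGraph s t α β).degree c = #{d ∈ blackCells s t α β | adj8 c d} := by
  rw [← SimpleGraph.card_neighborFinset_eq_degree, SimpleGraph.neighborFinset_eq_filter,
    ← card_map (Function.Embedding.subtype _)]
  congr 1
  ext d
  simp only [mem_map, mem_filter, mem_univ, true_and, Function.Embedding.coe_subtype]
  constructor
  · rintro ⟨d, hcd, rfl⟩
    exact ⟨d.2, hcd⟩
  · rintro ⟨hd, hcd⟩
    exact ⟨⟨d, hd⟩, hcd, rfl⟩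

section UnitStepBoard

variable {s t : ℕ} {α β : ℕ → ℕ}
  (hα : ∀ i, 1 ≤ i → i + 1 ≤ s → Nat.dist (α (i + 1)) (α i) = 1)
  (hβ : ∀ j, 1 ≤ j → j + 1 ≤ t → Nat.dist (β (j + 1)) (β j) = 1)
include hα hβ

/- Unit steps make the values at neighbouring indices distinct, so a black neighbour of `(i, j)`
is a diagonal one, moving up on both axes or down on both. -/
theorem filter_adj8_blackCells {i j : ℕ} (hc : (i, j) ∈ blackCells s t α β) :
    {d ∈ blackCells s t α β | adj8 (i, j) d} =
      upNbrs α s i ×ˢ upNbrs β t j ∪ downNbrs α s i ×ˢ downNbrs β t j := by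
  simp only [blackCells, mem_filter, mem_product] at hc
  obtain ⟨⟨hi, hj⟩, hij⟩ := hc
  ext ⟨k, l⟩
  simp only [blackCells, upNbrs, downNbrs, mem_filter, mem_union, mem_product]
  simp only [adj8, ne_eq, Prod.mk.injEq, Nat.dist_comm i k, Nat.dist_comm j l]
  constructor
  · rintro ⟨⟨⟨hk, hl⟩, hkl⟩, hne, hik, hjl⟩
    rcases eq_or_succ_or_succ_eq_of_dist_le_one hα hk hi hik with rfl | hk' | hk' <;>
    rcases eq_or_succ_or_succ_eq_of_dist_le_one hβ hl hj hjl with rfl | hl' | hl' <;>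
    first | exact absurd ⟨rfl, rfl⟩ hne | (rw [mem_Icc] at hk hl; simp only [mem_Icc]; omega)
  · rintro (⟨⟨hk, hik, hk'⟩, ⟨hl, hjl, hl'⟩⟩ | ⟨⟨hk, hik, hk'⟩, ⟨hl, hjl, hl'⟩⟩) <;>
    · have hne : k ≠ i := by rintro rfl; omega
      exact ⟨⟨⟨hk, hl⟩, by omega⟩, by omega, hik, hjl⟩

theorem blackGraph_degree_eq_of_unit_steps {i j : ℕ} (hc : (i, j) ∈ blackCells s t α β) :
    (blackGraph s t α β).degree ⟨(i, j), hc⟩ =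
      #(upNbrs α s i) * #(upNbrs β t j) + #(downNbrs α s i) * #(downNbrs β t j) := by
  rw [blackGraph_degree_eq_card_filter, filter_adj8_blackCells hα hβ hc, card_union_of_disjoint,
    card_product, card_product]
  rw [disjoint_left]
  rintro ⟨k, l⟩ h1 h2
  simp only [upNbrs, downNbrs, mem_product, mem_filter] at h1 h2
  omega

theorem dist_eq_one_of_blackGraph_adj {c d : blackCells s t α β}
    (h : (blackGraph s t α β).Adj c d) :
    Nat.dist d.1.1 c.1.1 = 1 ∧ Nat.dist d.1.2 c.1.2 = 1 := by
  obtain ⟨⟨i, j⟩, hc⟩ := c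
  have hd : d.1 ∈ {d ∈ blackCells s t α β | adj8 (i, j) d} := mem_filter.2 ⟨d.2, h⟩
  rw [filter_adj8_blackCells hα hβ hc] at hd
  rcases mem_union.1 hd with hd | hd <;> rw [mem_product] at hd
  · exact ⟨dist_eq_one_of_mem_upNbrs hd.1, dist_eq_one_of_mem_upNbrs hd.2⟩
  · exact ⟨dist_eq_one_of_mem_downNbrs hd.1, dist_eq_one_of_mem_downNbrs hd.2⟩

theorem getVert_blackGraph_mod_two {u w : blackCells s t α β} (p : (blackGraph s t α β).Walk u w) :
    ∀ k ≤ p.length, (p.getVert k).1.1 % 2 = (u.1.1 + k) % 2 ∧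
      (p.getVert k).1.2 % 2 = (u.1.2 + k) % 2 := by
  intro k hk
  induction k with
  | zero => simp
  | succ k ih =>
    have h := dist_eq_one_of_blackGraph_adj hα hβ (p.adj_getVert_succ (i := k) (by omega))
    have ih := ih (by omega)
    simp only [Nat.dist] at h
    omega

end UnitStepBoard

theorem even_mul_add_mul_of_add_eq_two {x x' y y' : ℕ} (hx : x + x' = 2) (hy : y + y' = 2) :
    Even (x * y + x' * y') := by
  have : x ≤ 2 := by omega
  have : y ≤ 2 := by omega
  obtain rfl : x' = 2 - x := by omega
  obtain rfl : y' = 2 - y := by omega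
  interval_cases x <;> interval_cases y <;> decide

section MountainClimbing

variable {s t : ℕ} {α β : ℕ → ℕ}
  (hα : ∀ i, 1 ≤ i → i + 1 ≤ s → Nat.dist (α (i + 1)) (α i) = 1)
  (hβ : ∀ j, 1 ≤ j → j + 1 ≤ t → Nat.dist (β (j + 1)) (β j) = 1)
  (hα1 : α 1 = 1) (hβ1 : β 1 = 1) (hβt : β t = 1) (ht : 2 ≤ t) (hαs : 2 ≤ α s)
  (hαlb : ∀ i ∈ Icc 1 s, 1 ≤ α i) (hαub : ∀ i ∈ Icc 1 s, α i ≤ α s)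
  (hβlb : ∀ j ∈ Icc 1 t, 1 ≤ β j) (hβub : ∀ j ∈ Icc 1 t, β j ≤ α s)
include hα hβ hα1 hαs hαlb hβlb

include ht in
theorem blackGraph_degree_one_one (hc : (1, 1) ∈ blackCells s t α β) :
    (blackGraph s t α β).degree ⟨(1, 1), hc⟩ = 1 := by
  simp only [blackCells, mem_filter, mem_product, mem_Icc] at hc
  have hs : 2 ≤ s := by
    by_contra! hs
    obtain rfl : s = 1 := by omega
    omega
  rw [blackGraph_degree_eq_of_unit_steps hα hβ,
    downNbrs_eq_empty_of_forall_le fun k hk => by have := hαlb k hk; omega, card_empty, zero_mul,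
    add_zero, card_upNbrs_of_forall_le hα (by simp; omega) fun k hk => by have := hαlb k hk; omega,
    card_upNbrs_of_forall_le hβ (by simp; omega) fun k hk => by have := hβlb k hk; omega,
    card_pathNbrs_of_eq_one_or_eq hs (Or.inl rfl), card_pathNbrs_of_eq_one_or_eq ht (Or.inl rfl)]

/- A black cell on an edge of the board, other than the two corners, has value `1` or `α s`, where
both maps turn the same way; and it is interior along the other axis. -/
include hβ1 hβt hαub hβub in
theorem even_blackGraph_degree {i j : ℕ} (hc : (i, j) ∈ blackCells s t α β)
    (h11 : (i, j) ≠ (1, 1)) (h1t : (i, j) ≠ (1, t)) :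
    Even ((blackGraph s t α β).degree ⟨(i, j), hc⟩) := by
  have hc' := hc
  simp only [blackCells, mem_filter, mem_product] at hc'
  obtain ⟨⟨hi, hj⟩, hij⟩ := hc'
  have hi' := mem_Icc.1 hi
  have hj' := mem_Icc.1 hj
  simp only [ne_eq, Prod.mk.injEq] at h11 h1t
  rw [blackGraph_degree_eq_of_unit_steps hα hβ hc]
  by_cases hv1 : α i = 1
  · rw [downNbrs_eq_empty_of_forall_le fun k hk => by have := hαlb k hk; omega, card_empty,
      zero_mul, add_zero, card_upNbrs_of_forall_le hα hi fun k hk => by have := hαlb k hk; omega,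
      card_upNbrs_of_forall_le hβ hj fun k hk => by have := hβlb k hk; omega]
    by_cases hi1 : i = 1
    · rw [card_pathNbrs_of_lt_of_lt (n := t) (by omega) (by omega)]
      exact even_two.mul_left _
    · have his : i ≠ s := by rintro rfl; omega
      rw [card_pathNbrs_of_lt_of_lt (n := s) (by omega) (by omega)]
      exact even_two.mul_right _
  by_cases hvs : α i = α s
  · have hj1 : j ≠ 1 := by rintro rfl; omega
    have hjt : j ≠ t := by rintro rfl; omega
    rw [upNbrs_eq_empty_of_forall_ge fun k hk => by have := hαub k hk; omega, card_empty,
      zero_mul, zero_add, card_downNbrs_of_forall_ge hβ hj fun k hk => by have := hβub k hk; omega,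
      card_pathNbrs_of_lt_of_lt (n := t) (by omega) (by omega)]
    exact even_two.mul_left _
  have hi1 : i ≠ 1 := by rintro rfl; omega
  have his : i ≠ s := by rintro rfl; omega
  have hj1 : j ≠ 1 := by rintro rfl; omega
  have hjt : j ≠ t := by rintro rfl; omega
  have hrow := card_upNbrs_add_card_downNbrs hα hi
  have hcol := card_upNbrs_add_card_downNbrs hβ hj
  rw [card_pathNbrs_of_lt_of_lt (by omega) (by omega)] at hrow hcol
  exact even_mul_add_mul_of_add_eq_two hrow hcol

include ht hβ1 hβt hαub hβub in
theorem blackGraph_reachable {u w : blackCells s t α β} (hu : u.1 = (1, 1)) (hw : w.1 = (1, t)) :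
    (blackGraph s t α β).Reachable u w := by
  obtain ⟨_, hu'⟩ := u
  subst hu
  refine (blackGraph s t α β).reachable_of_odd_degree ?_ ?_
  · rw [blackGraph_degree_one_one hα hβ hα1 ht hαs hαlb hβlb]
    exact odd_one
  · rintro ⟨⟨i, j⟩, hc⟩ h11 h1t
    refine even_blackGraph_degree hα hβ hα1 hβ1 hβt hαs hαlb hαub hβlb hβub hc ?_ ?_
    · exact fun h => h11 (Subtype.ext h)
    · exact fun h => h1t (Subtype.ext (h.trans hw.symm))

end MountainClimbing

def subdivideMid (a b : ℕ) : ℕ := if a = b ∧ 2 ≤ a then 2 * a - 2 else 2 * min a b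

/-- Position `2 * k - 1` carries `2 * f k - 1`, and the position after it a value adjacent to both
`2 * f k - 1` and `2 * f (k + 1) - 1`; across a plateau it dips down, except at the bottom value
`1`, so that the subdivided walk stays within `[1, 2 * M - 1]` whenever `f` stays within `[1, M]`. -/
def subdivide (f : ℕ → ℕ) (n : ℕ) : ℕ :=
  if n % 2 = 1 then 2 * f (n / 2 + 1) - 1 else subdivideMid (f (n / 2)) (f (n / 2 + 1))

theorem dist_subdivideMid {a b : ℕ} (hab : Nat.dist a b ≤ 1) (ha : 1 ≤ a) (hb : 1 ≤ b) :
    Nat.dist (subdivideMid a b) (2 * a - 1) = 1 ∧ Nat.dist (subdivideMid a b) (2 * b - 1) = 1 := by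
  unfold subdivideMid Nat.dist at *
  split_ifs <;> omega

theorem one_le_subdivideMid {a b : ℕ} (ha : 1 ≤ a) (hb : 1 ≤ b) : 1 ≤ subdivideMid a b := by
  unfold subdivideMid
  split_ifs <;> omega

theorem subdivideMid_le {a b M : ℕ} (hM : 2 ≤ M) (ha : a ≤ M) (hb : b ≤ M) :
    subdivideMid a b ≤ 2 * M - 1 := by
  unfold subdivideMid
  split_ifs <;> omega

theorem subdivide_of_odd (f : ℕ → ℕ) {n : ℕ} (hn : n % 2 = 1) :
    subdivide f n = 2 * f (n / 2 + 1) - 1 :=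
  if_pos hn

theorem subdivide_two_mul_sub_one (f : ℕ → ℕ) {n : ℕ} (hn : 1 ≤ n) :
    subdivide f (2 * n - 1) = 2 * f n - 1 := by
  rw [subdivide_of_odd f (by omega), show (2 * n - 1) / 2 + 1 = n by omega]

theorem subdivide_two_mul_add_two (f : ℕ → ℕ) (k : ℕ) :
    subdivide f (2 * k + 2) = subdivideMid (f (k + 1)) (f (k + 2)) := by
  rw [subdivide, if_neg (by omega), show (2 * k + 2) / 2 = k + 1 by omega]

theorem subdivide_le {f : ℕ → ℕ} {n M : ℕ} (hM : 2 ≤ M) (hub : ∀ i ∈ Icc 1 n, f i ≤ M) :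
    ∀ i ∈ Icc 1 (2 * n - 1), subdivide f i ≤ 2 * M - 1 := by
  intro i hi
  rw [mem_Icc] at hi
  obtain ⟨k, rfl | rfl⟩ : ∃ k, i = 2 * k + 1 ∨ i = 2 * k + 2 := ⟨(i - 1) / 2, by omega⟩
  · rw [subdivide_of_odd f (by omega), show (2 * k + 1) / 2 = k by omega]
    have := hub (k + 1) (by simp; omega)
    omega
  · rw [subdivide_two_mul_add_two]
    exact subdivideMid_le hM (hub _ (by simp; omega)) (hub _ (by simp; omega))

section Subdivide

variable {f : ℕ → ℕ} {n : ℕ} (hlb : ∀ i ∈ Icc 1 n, 1 ≤ f i)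
include hlb

theorem one_le_subdivide : ∀ i ∈ Icc 1 (2 * n - 1), 1 ≤ subdivide f i := by
  intro i hi
  rw [mem_Icc] at hi
  obtain ⟨k, rfl | rfl⟩ : ∃ k, i = 2 * k + 1 ∨ i = 2 * k + 2 := ⟨(i - 1) / 2, by omega⟩
  · rw [subdivide_of_odd f (by omega), show (2 * k + 1) / 2 = k by omega]
    have := hlb (k + 1) (by simp; omega)
    omega
  · rw [subdivide_two_mul_add_two]
    exact one_le_subdivideMid (hlb _ (by simp; omega)) (hlb _ (by simp; omega))

theorem subdivide_dist_eq_one (hf : ∀ i, 1 ≤ i → i + 1 ≤ n → Nat.dist (f (i + 1)) (f i) ≤ 1) :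
    ∀ i, 1 ≤ i → i + 1 ≤ 2 * n - 1 → Nat.dist (subdivide f (i + 1)) (subdivide f i) = 1 := by
  intro i hi hin
  obtain ⟨k, hk⟩ : ∃ k, i = 2 * k + 1 ∨ i = 2 * k + 2 := ⟨(i - 1) / 2, by omega⟩
  have hmid := dist_subdivideMid (Nat.dist_comm (f (k + 1)) _ ▸ hf (k + 1) (by omega) (by omega))
    (hlb _ (by simp; omega)) (hlb _ (by simp; omega))
  rcases hk with rfl | rfl
  · rw [subdivide_two_mul_add_two, subdivide_of_odd f (by omega),
      show (2 * k + 1) / 2 = k by omega]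
    exact hmid.1
  · rw [subdivide_two_mul_add_two, subdivide_of_odd f (by omega),
      show (2 * k + 2 + 1) / 2 = k + 1 by omega, Nat.dist_comm]
    exact hmid.2

end Subdivide

theorem mem_board_of_mem_blackCells_subdivide {s t : ℕ} {α β : ℕ → ℕ} {a b : ℕ}
    (h : (a, b) ∈ blackCells (2 * s - 1) (2 * t - 1) (subdivide α) (subdivide β))
    (ha : a % 2 = 1) (hb : b % 2 = 1) :
    (a / 2 + 1, b / 2 + 1) ∈ board s t ∧ α (a / 2 + 1) = β (b / 2 + 1) := by
  simp only [blackCells, mem_filter, mem_product, mem_Icc, subdivide_of_odd _ ha,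
    subdivide_of_odd _ hb] at h
  simp only [board, Set.mem_ofPred_eq]
  omega

theorem adj8_halve {c d e : ℕ × ℕ} (hdc : Nat.dist d.1 c.1 = 1 ∧ Nat.dist d.2 c.2 = 1)
    (hed : Nat.dist e.1 d.1 = 1 ∧ Nat.dist e.2 d.2 = 1) (hc : c.1 % 2 = 1 ∧ c.2 % 2 = 1)
    (he : e.1 % 2 = 1 ∧ e.2 % 2 = 1) (hce : c ≠ e) :
    adj8 (c.1 / 2 + 1, c.2 / 2 + 1) (e.1 / 2 + 1, e.2 / 2 + 1) := by
  simp only [adj8, ne_eq, Prod.mk.injEq, Nat.dist] at hdc hed ⊢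
  exact ⟨fun h => hce (Prod.ext (by omega) (by omega)), by omega, by omega⟩

theorem pathBetween_of_reachable_subdivide {s t : ℕ} {α β : ℕ → ℕ}
    (hα : ∀ i, 1 ≤ i → i + 1 ≤ 2 * s - 1 → Nat.dist (subdivide α (i + 1)) (subdivide α i) = 1)
    (hβ : ∀ j, 1 ≤ j → j + 1 ≤ 2 * t - 1 → Nat.dist (subdivide β (j + 1)) (subdivide β j) = 1)
    {u w : blackCells (2 * s - 1) (2 * t - 1) (subdivide α) (subdivide β)}
    (hu : u.1 = (1, 1)) (hw : w.1 = (1, 2 * t - 1))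
    (h : (blackGraph (2 * s - 1) (2 * t - 1) (subdivide α) (subdivide β)).Reachable u w) :
    PathBetween adj8 (fun c => c ∈ board s t ∧ α c.1 = β c.2) {(1, 1)} {(1, t)} := by
  -- On a path, cells two steps apart are distinct, so their projections are adjacent.
  obtain ⟨p, hp⟩ : ∃ p : (blackGraph _ _ _ _).Walk u w, p.IsPath :=
    ⟨h.some.bypass, h.some.bypass_isPath⟩
  have ht : 1 ≤ t := by
    have := hw ▸ w.2
    simp only [blackCells, mem_filter, mem_product, mem_Icc] at this
    omega
  have hpar := getVert_blackGraph_mod_two hα hβ p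
  rw [hu] at hpar
  have hstep : ∀ k < p.length, Nat.dist (p.getVert (k + 1)).1.1 (p.getVert k).1.1 = 1 ∧
      Nat.dist (p.getVert (k + 1)).1.2 (p.getVert k).1.2 = 1 :=
    fun k hk => dist_eq_one_of_blackGraph_adj hα hβ (p.adj_getVert_succ hk)
  have hlen : p.length % 2 = 0 := by
    have := (hpar p.length le_rfl).1
    rw [p.getVert_length, hw] at this
    omega
  have hodd : ∀ k ≤ p.length / 2,
      (p.getVert (2 * k)).1.1 % 2 = 1 ∧ (p.getVert (2 * k)).1.2 % 2 = 1 := by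
    intro k hk
    have := hpar (2 * k) (by omega)
    omega
  refine ⟨p.length / 2, fun k => ((p.getVert (2 * k)).1.1 / 2 + 1, (p.getVert (2 * k)).1.2 / 2 + 1),
    ?_, ?_, ?_, ?_⟩
  · simp [hu]
  · simp only [show 2 * (p.length / 2) = p.length by omega, p.getVert_length, hw,
      Set.mem_singleton_iff, Prod.mk.injEq, true_and]
    omega
  · intro k hk
    exact mem_board_of_mem_blackCells_subdivide (p.getVert (2 * k)).2 (hodd k hk).1 (hodd k hk).2
  · intro k hk
    have hne : p.getVert (2 * k) ≠ p.getVert (2 * k + 1 + 1) := fun h =>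
      absurd (hp.getVert_injOn (by simp; omega) (by simp; omega) h) (by omega)
    exact adj8_halve (hstep (2 * k) (by omega)) (hstep (2 * k + 1) (by omega)) (hodd k (by omega))
      (hodd (k + 1) (by omega)) (Subtype.coe_injective.ne hne)

theorem PathBetween.mono {adj : ℕ × ℕ → ℕ × ℕ → Prop} {good good' : ℕ × ℕ → Prop}
    {A B : Set (ℕ × ℕ)} (h : ∀ c, good c → good' c) (hp : PathBetween adj good A B) :
    PathBetween adj good' A B :=
  let ⟨L, σ, h0, hL, hg, hadj⟩ := hp
  ⟨L, σ, h0, hL, fun i hi => h _ (hg i hi), hadj⟩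

theorem board_mono {s s' t t' : ℕ} (hs : s ≤ s') (ht : t ≤ t') : board s t ⊆ board s' t' :=
  fun _ hc => ⟨hc.1, hc.2.1.trans hs, hc.2.2.1, hc.2.2.2.trans ht⟩

theorem pathBetween_row {s t : ℕ} {α β : ℕ → ℕ} (hs : 1 ≤ s) (ht : 1 ≤ t)
    (hβ : ∀ j ∈ Icc 1 t, β j = α 1) :
    PathBetween adj8 (fun c => c ∈ board s t ∧ α c.1 = β c.2) {(1, 1)} {(1, t)} := by
  refine ⟨t - 1, fun k => (1, k + 1), rfl, by simp; omega, fun k hk => ⟨?_, ?_⟩, fun k hk => ?_⟩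
  · simp only [board, Set.mem_ofPred_eq]
    omega
  · exact (hβ (k + 1) (by simp; omega)).symm
  · simp [adj8, Nat.dist]

theorem pathBetween_of_le_last {s t : ℕ} {α β : ℕ → ℕ}
    (hα : ∀ i, 1 ≤ i → i + 1 ≤ s → Nat.dist (α (i + 1)) (α i) ≤ 1)
    (hβ : ∀ j, 1 ≤ j → j + 1 ≤ t → Nat.dist (β (j + 1)) (β j) ≤ 1)
    (hα1 : α 1 = 1) (hβ1 : β 1 = 1) (hβt : β t = 1) (hs : 1 ≤ s) (ht : 1 ≤ t)
    (hαlb : ∀ i ∈ Icc 1 s, 1 ≤ α i) (hαub : ∀ i ∈ Icc 1 s, α i ≤ α s)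
    (hβlb : ∀ j ∈ Icc 1 t, 1 ≤ β j) (hβub : ∀ j ∈ Icc 1 t, β j ≤ α s) :
    PathBetween adj8 (fun c => c ∈ board s t ∧ α c.1 = β c.2) {(1, 1)} {(1, t)} := by
  by_cases hβα : ∀ j ∈ Icc 1 t, β j = α 1
  · exact pathBetween_row hs ht hβα
  push Not at hβα
  obtain ⟨j, hj, hβj⟩ := hβα
  have hj1 : j ≠ 1 := by rintro rfl; exact hβj (hβ1.trans hα1.symm)
  have h2t : 2 ≤ 2 * t - 1 := by rw [mem_Icc] at hj; omega
  have h2s : 2 ≤ α s := by have := hβlb j hj; have := hβub j hj; omega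
  have hα' := subdivide_dist_eq_one hαlb hα
  have hβ' := subdivide_dist_eq_one hβlb hβ
  have hαs' := subdivide_two_mul_sub_one α hs
  have hβt' := subdivide_two_mul_sub_one β ht
  have hα1' := subdivide_two_mul_sub_one α le_rfl
  have hβ1' := subdivide_two_mul_sub_one β le_rfl
  simp only [mul_one, hα1, hβ1, hβt] at hα1' hβ1' hβt'
  refine pathBetween_of_reachable_subdivide hα' hβ' (u := ⟨(1, 1), ?_⟩) (w := ⟨(1, 2 * t - 1), ?_⟩)
    rfl rfl (blackGraph_reachable hα' hβ' hα1' hβ1' hβt' h2t (by omega) (one_le_subdivide hαlb)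
      (hαs' ▸ subdivide_le h2s hαub) (one_le_subdivide hβlb) (hαs' ▸ subdivide_le h2s hβub) rfl rfl)
  · simp only [blackCells, mem_filter, mem_product, mem_Icc, hα1', hβ1', and_true]
    omega
  · simp only [blackCells, mem_filter, mem_product, mem_Icc, hα1', hβt', and_true]
    omega

theorem black_path_corner_to_corner_general (r s t : ℕ) (ht : 1 ≤ t)
    (α β : ℕ → ℕ)
    (hαmem : ∀ i ∈ Finset.Icc 1 s, α i ∈ Finset.Icc 1 r)
    (hβmem : ∀ j ∈ Finset.Icc 1 t, β j ∈ Finset.Icc 1 r)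
    (hαstep : ∀ i, 1 ≤ i → i + 1 ≤ s → Nat.dist (α (i + 1)) (α i) ≤ 1)
    (hβstep : ∀ j, 1 ≤ j → j + 1 ≤ t → Nat.dist (β (j + 1)) (β j) ≤ 1)
    (hα1 : α 1 = 1) (hβ1 : β 1 = 1) (hβt : β t = 1)
    (hrng : ∀ j ∈ Finset.Icc 1 t, ∃ i ∈ Finset.Icc 1 s, α i = β j) :
    PathBetween adj8 (fun c => c ∈ board s t ∧ α c.1 = β c.2)
      {((1 : ℕ), (1 : ℕ))} {((1 : ℕ), t)} := by
  obtain ⟨j₀, hj₀, hβmax⟩ := (Icc 1 t).exists_max_image β ⟨1, by simp [ht]⟩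
  obtain ⟨i₀, hi₀, hαi₀⟩ := hrng j₀ hj₀
  obtain ⟨s₀, hs₀, hαmax⟩ := (Icc 1 i₀).exists_max_image α ⟨1, by simp at hi₀ ⊢; omega⟩
  rw [mem_Icc] at hi₀ hs₀
  have hαlb : ∀ i ∈ Icc 1 s₀, 1 ≤ α i := fun i hi =>
    (mem_Icc.1 (hαmem i (Icc_subset_Icc_right (by omega) hi))).1
  have hβlb : ∀ j ∈ Icc 1 t, 1 ≤ β j := fun j hj => (mem_Icc.1 (hβmem j hj)).1
  have hαub : ∀ i ∈ Icc 1 s₀, α i ≤ α s₀ := fun i hi => hαmax i (Icc_subset_Icc_right hs₀.2 hi)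
  have hβub : ∀ j ∈ Icc 1 t, β j ≤ α s₀ := fun j hj =>
    (hβmax j hj).trans (hαi₀ ▸ hαmax i₀ (by simp; omega))
  refine (pathBetween_of_le_last (fun i hi hi' => hαstep i hi (by omega)) hβstep hα1 hβ1 hβt
    hs₀.1 ht hαlb hαub hβlb hβub).mono fun c hc => ⟨board_mono (by omega) le_rfl hc.1, hc.2⟩

/-- If `α : [s] → [r]` and `β : [t] → [r]` are relation-preserving,
`α 1 = 1`, `β 1 = β t = 1` and `rng β ⊆ rng α`, then in the chessboard `[s]×[t]`
colored black at `(i,j)` iff `α i = β j` there is a black 8-path from `(1,1)`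
to `(1,t)`. -/
theorem black_path_corner_to_corner (r s t : ℕ) (hr : 1 ≤ r) (hs : 1 ≤ s) (ht : 1 ≤ t)
    (α β : ℕ → ℕ)
    (hαmem : ∀ i ∈ Finset.Icc 1 s, α i ∈ Finset.Icc 1 r)
    (hβmem : ∀ j ∈ Finset.Icc 1 t, β j ∈ Finset.Icc 1 r)
    (hαstep : ∀ i, 1 ≤ i → i + 1 ≤ s → Nat.dist (α (i + 1)) (α i) ≤ 1)
    (hβstep : ∀ j, 1 ≤ j → j + 1 ≤ t → Nat.dist (β (j + 1)) (β j) ≤ 1)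
    (hα1 : α 1 = 1) (hβ1 : β 1 = 1) (hβt : β t = 1)
    (hrng : ∀ j ∈ Finset.Icc 1 t, ∃ i ∈ Finset.Icc 1 s, α i = β j) :
    PathBetween adj8 (fun c => c ∈ board s t ∧ α c.1 = β c.2)
      {((1 : ℕ), (1 : ℕ))} {((1 : ℕ), t)} :=
  black_path_corner_to_corner_general r s t ht α β hαmem hβmem hαstep hβstep hα1 hβ1 hβt hrng
end

section
/- Let G be a non-archimedean Polish group and let f ∈ G. Then the following are equivalent: (1) the conjugacy class {g f g⁻¹ : g ∈ G} is non-meager in G; (2) for each open subgroup V of G, the set {g f g⁻¹ : g ∈ V} is somewhere dense in G; (3) for each open subgroup V of G, f belongs to the interior of the closure of {g f g⁻¹ : g ∈ V}. -/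
open Set Topology TopologicalSpace Pointwise

/-!
Write `C_V` for the set of `V`-conjugates of `f`. Conjugation by an element of `V` permutes
`C_V`, so a nonempty open set `interior (closure C_V)` meets `C_V` in some `v f v⁻¹` and can be
conjugated back by `v⁻¹` to contain `f`. If some `C_V` is nowhere dense, the conjugacy class is
the union of the conjugates `d C_V d⁻¹` over representatives `d` of the countable discrete space
`G ⧸ V`, hence meagre. Conversely, if the class is meagre, Baire's theorem applied to the map
`g ↦ g f g⁻¹` yields a nonempty open set, hence a coset `x V`, whose image `x C_V x⁻¹` is
nowhere dense.
-/

theorem exists_isOpen_isNowhereDense_image_of_isMeagre_range {X Y : Type*} [TopologicalSpace X]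
    [TopologicalSpace Y] [BaireSpace X] [Nonempty X] {φ : X → Y} (hφ : Continuous φ)
    (h : IsMeagre (range φ)) :
    ∃ U : Set X, IsOpen U ∧ U.Nonempty ∧ IsNowhereDense (φ '' U) := by
  obtain ⟨S, hS, hSc, hcover⟩ := isMeagre_iff_countable_union_isNowhereDense.mp h
  have : Countable S := hSc.to_subtype
  have hunion : ⋃ t : S, φ ⁻¹' closure t = univ :=
    eq_univ_of_forall fun x => by
      obtain ⟨t, ht, hxt⟩ := hcover (mem_range_self x)
      exact mem_iUnion.mpr ⟨⟨t, ht⟩, subset_closure hxt⟩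
  obtain ⟨t, hU⟩ := nonempty_interior_of_iUnion_of_closed
    (fun t : S => isClosed_closure.preimage hφ) hunion
  refine ⟨_, isOpen_interior, hU, (hS t t.2).closure.mono ?_⟩
  exact (image_mono interior_subset).trans (image_preimage_subset _ _)

theorem NonarchimedeanGroup.exists_openSubgroup_smul_subset {G : Type*} [Group G]
    [TopologicalSpace G] [NonarchimedeanGroup G] {U : Set G} {x : G} (hU : U ∈ 𝓝 x) :
    ∃ V : OpenSubgroup G, x • (V : Set G) ⊆ U := by
  have : (x * ·) ⁻¹' U ∈ 𝓝 1 :=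
    (continuous_const_mul x).continuousAt.preimage_mem_nhds (by rwa [mul_one])
  obtain ⟨V, hV⟩ := NonarchimedeanGroup.is_nonarchimedean _ this
  exact ⟨V, by rwa [← image_smul, image_subset_iff]⟩

section

variable {G : Type*} [Group G] [TopologicalSpace G] [IsTopologicalGroup G]

def conjHomeomorph (g : G) : G ≃ₜ G := Homeomorph.smul (ConjAct.toConjAct g)

@[simp]
lemma conjHomeomorph_apply (g x : G) : conjHomeomorph g x = g * x * g⁻¹ :=
  ConjAct.toConjAct_smul g x

lemma conjHomeomorph_image_conj_image_subgroup {V : Subgroup G} {v : G} (hv : v ∈ V) (f : G) :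
    conjHomeomorph v '' ((fun g => g * f * g⁻¹) '' V) = (fun g => g * f * g⁻¹) '' V := by
  have : (fun g => v * (g * f * g⁻¹) * v⁻¹) = (fun g => g * f * g⁻¹) ∘ (v * ·) := by
    ext g; simp only [Function.comp_apply, mul_inv_rev]; group
  rw [image_image, funext (conjHomeomorph_apply v ·), this, image_comp, image_mul_left]
  congr 1
  ext g
  simp [Subgroup.mul_mem_cancel_left _ (V.inv_mem hv)]

lemma mem_interior_closure_conj_image_of_nonempty {V : Subgroup G} {f : G}
    (h : (interior (closure ((fun g => g * f * g⁻¹) '' V))).Nonempty) :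
    f ∈ interior (closure ((fun g => g * f * g⁻¹) '' V)) := by
  set C := (fun g => g * f * g⁻¹) '' (V : Set G)
  obtain ⟨_, ⟨v, hv, rfl⟩, hvC⟩ : (C ∩ interior (closure C)).Nonempty :=
    (closure_inter_open_nonempty_iff isOpen_interior).mp
      (by rwa [inter_eq_right.mpr interior_subset])
  have hinv : conjHomeomorph v⁻¹ '' interior (closure C) = interior (closure C) := by
    rw [Homeomorph.image_interior, Homeomorph.image_closure,
      conjHomeomorph_image_conj_image_subgroup (V.inv_mem hv)]
  rw [← hinv]
  exact ⟨_, hvC, by simp [mul_assoc]⟩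

lemma isMeagre_range_conj_of_isNowhereDense [SeparableSpace G] {V : Subgroup G}
    (hV : IsOpen (V : Set G)) {f : G} (h : IsNowhereDense ((fun g => g * f * g⁻¹) '' V)) :
    IsMeagre (range fun g : G => g * f * g⁻¹) := by
  have : DiscreteTopology (G ⧸ V) := QuotientGroup.discreteTopology hV
  have : Countable (G ⧸ V) := separableSpace_iff_countable.mp
    (QuotientGroup.isQuotientMap_mk V).separableSpace
  refine (isMeagre_iUnion fun q : G ⧸ V =>
    ((conjHomeomorph q.out).isInducing.isNowhereDense_image h).isMeagre).mono ?_
  rintro _ ⟨g, rfl⟩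
  obtain ⟨v, hv⟩ := QuotientGroup.mk_out_eq_mul V g
  refine mem_iUnion.mpr ⟨g, v⁻¹ * f * v⁻¹⁻¹, ⟨v⁻¹, V.inv_mem v.2, rfl⟩, ?_⟩
  simp only [hv, InvMemClass.coe_inv, inv_inv, conjHomeomorph_apply, mul_inv_rev]
  group

end

lemma exists_openSubgroup_isNowhereDense_of_isMeagre_range {G : Type*} [Group G]
    [TopologicalSpace G] [NonarchimedeanGroup G] [BaireSpace G] {f : G}
    (h : IsMeagre (range fun g : G => g * f * g⁻¹)) :
    ∃ V : OpenSubgroup G, IsNowhereDense ((fun g => g * f * g⁻¹) '' (V : Set G)) := by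
  obtain ⟨U, hUo, ⟨x, hx⟩, hU⟩ :=
    exists_isOpen_isNowhereDense_image_of_isMeagre_range (by fun_prop) h
  obtain ⟨V, hV⟩ := NonarchimedeanGroup.exists_openSubgroup_smul_subset (hUo.mem_nhds hx)
  refine ⟨V, ((conjHomeomorph x⁻¹).isInducing.isNowhereDense_image hU).mono ?_⟩
  rintro _ ⟨v, hv, rfl⟩
  exact ⟨_, mem_image_of_mem _ (hV (smul_mem_smul_set hv)), by
    simp only [smul_eq_mul, mul_inv_rev, conjHomeomorph_apply, inv_inv]
    group⟩

theorem nonmeager_conjugacy_class_tfae_general (G : Type*) [Group G] [TopologicalSpace G]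
    [PolishSpace G] [NonarchimedeanGroup G] (f : G) :
    List.TFAE
      [ ¬ IsMeagre {h : G | ∃ g : G, g * f * g⁻¹ = h},
        ∀ V : Subgroup G, IsOpen (V : Set G) →
          (interior (closure {h : G | ∃ g ∈ V, g * f * g⁻¹ = h})).Nonempty,
        ∀ V : Subgroup G, IsOpen (V : Set G) →
          f ∈ interior (closure {h : G | ∃ g ∈ V, g * f * g⁻¹ = h}) ] := by
  tfae_have 1 → 2 := fun h1 V hV => by
    by_contra h
    exact h1 (isMeagre_range_conj_of_isNowhereDense hV (not_nonempty_iff_eq_empty.mp h))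
  tfae_have 2 → 1 := fun h2 h1 => by
    obtain ⟨V, hV⟩ := exists_openSubgroup_isNowhereDense_of_isMeagre_range h1
    exact (h2 V V.isOpen).ne_empty hV
  tfae_have 2 → 3 := fun h2 V hV => mem_interior_closure_conj_image_of_nonempty (h2 V hV)
  tfae_have 3 → 2 := fun h3 V hV => ⟨f, h3 V hV⟩
  tfae_finish

/-- Kechris–Rosendal criterion: in a non-archimedean Polish group `G`, the
conjugacy class of `f` is non-meager iff for each open subgroup `V` the
`V`-conjugates of `f` are somewhere dense, iff for each open subgroup `V`, `f`
lies in the interior of the closure of its `V`-conjugates. -/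
theorem nonmeager_conjugacy_class_tfae (G : Type*) [Group G] [TopologicalSpace G]
    [IsTopologicalGroup G] [PolishSpace G] [NonarchimedeanGroup G] (f : G) :
    List.TFAE
      [ ¬ IsMeagre {h : G | ∃ g : G, g * f * g⁻¹ = h},
        ∀ V : Subgroup G, IsOpen (V : Set G) →
          (interior (closure {h : G | ∃ g ∈ V, g * f * g⁻¹ = h})).Nonempty,
        ∀ V : Subgroup G, IsOpen (V : Set G) →
          f ∈ interior (closure {h : G | ∃ g ∈ V, g * f * g⁻¹ = h}) ] :=
  nonmeager_conjugacy_class_tfae_general G f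
end
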